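/- arXiv:2104.08488 — 2 statements merged into one kernel-verified Lean document; each statement's English description precedes it below -/
import Mathlib

section
/- Let H be a real Hilbert space and A a positive operator on H. Let P be the orthogonal projection onto the closure of the range R(A), let A₀ be the restriction of A to the closure of R(A), and for an A-bounded operator C let C̃ = P∘C restricted to the closure of R(A). Then ‖C‖_A = ‖C̃‖_{A₀}, where ‖C̃‖_{A₀} = sup{‖C̃v‖_{A₀} : v ∈ closure of R(A), ‖v‖_{A₀} = 1} and ‖v‖_{A₀} = √⟨A₀v, v⟩. -/
noncomputable section

/-- The seminorm induced by a positive operator `A`: `‖x‖_A = √(re ⟪A x, x⟫)`. -/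
def anorm {𝕜 H : Type*} [RCLike 𝕜] [NormedAddCommGroup H] [InnerProductSpace 𝕜 H]
    (A : H →L[𝕜] H) (x : H) : ℝ :=
  Real.sqrt (RCLike.re (inner 𝕜 (A x) x : 𝕜))

/-- The semi-inner product induced by `A`: `⟨x, y⟩_A = ⟪A x, y⟫`. -/
def ainner {𝕜 H : Type*} [RCLike 𝕜] [NormedAddCommGroup H] [InnerProductSpace 𝕜 H]
    (A : H →L[𝕜] H) (x y : H) : 𝕜 :=
  (inner 𝕜 (A x) y : 𝕜)

/-- `T` is `A`-bounded. -/
def IsABounded {𝕜 H : Type*} [RCLike 𝕜] [NormedAddCommGroup H] [InnerProductSpace 𝕜 H]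
    (A T : H →L[𝕜] H) : Prop :=
  ∃ c > 0, ∀ x : H, anorm A (T x) ≤ c * anorm A x

/-- The `A`-norm of an operator `T`: `sup {‖Tx‖_A : ‖x‖_A = 1}`. -/
def opAnorm {𝕜 H : Type*} [RCLike 𝕜] [NormedAddCommGroup H] [InnerProductSpace 𝕜 H]
    (A T : H →L[𝕜] H) : ℝ :=
  sSup {r : ℝ | ∃ x : H, anorm A x = 1 ∧ r = anorm A (T x)}

/-- `(ε,A)`-approximate orthogonality in the sense of Chmieliński, for vectors. -/
def VOrthEps {𝕜 H : Type*} [RCLike 𝕜] [NormedAddCommGroup H] [InnerProductSpace 𝕜 H]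
    (A : H →L[𝕜] H) (ε : ℝ) (x y : H) : Prop :=
  ∀ l : 𝕜, anorm A x ^ 2 - 2 * ε * anorm A x * anorm A (l • y) ≤ anorm A (x + l • y) ^ 2

/-- `(ε,A)`-approximate orthogonality in the sense of Chmieliński, for operators. -/
def OpOrthEps {𝕜 H : Type*} [RCLike 𝕜] [NormedAddCommGroup H] [InnerProductSpace 𝕜 H]
    (A T S : H →L[𝕜] H) (ε : ℝ) : Prop :=
  ∀ l : 𝕜, opAnorm A T ^ 2 - 2 * ε * opAnorm A T * opAnorm A (l • S) ≤ opAnorm A (T + l • S) ^ 2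

end

/-! For positive `A`, `‖x‖_A = 0` exactly when `A x = 0`, and adding a vector of `ker A` does not
change `‖·‖_A`. Since `ker A = (closure R(A))ᗮ` contains every `x - P x`, the projection `P`
preserves `‖·‖_A`; an `A`-bounded `C` maps `ker A` into itself, so also `‖C (P x)‖_A = ‖C x‖_A`.
Hence the two sets of values whose suprema are compared coincide. -/

open scoped InnerProductSpace

section

variable {H : Type*} [NormedAddCommGroup H] [InnerProductSpace ℝ H] {A : H →L[ℝ] H}

lemma anorm_sq (hA : A.IsPositive) (x : H) : anorm A x ^ 2 = ⟪A x, x⟫_ℝ :=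
  Real.sq_sqrt (by simpa using hA.re_inner_nonneg_left x)

/-- The quadratic `t ↦ ⟪A (w - t • A w), w - t • A w⟫ = t² ⟪A (A w), A w⟫ - 2 t ‖A w‖²` is
nonnegative and vanishes at `0`, so its linear coefficient vanishes. -/
lemma ContinuousLinearMap.IsPositive.apply_eq_zero_of_inner_apply_self_eq_zero
    (hA : A.IsPositive) {w : H} (hw : ⟪A w, w⟫_ℝ = 0) : A w = 0 := by
  have hsymm : ⟪A (A w), w⟫_ℝ = ⟪A w, A w⟫_ℝ := hA.isSymmetric (A w) w
  have hquad : ∀ t : ℝ, 0 ≤ ⟪A (A w), A w⟫_ℝ * (t * t) + (-2 * ⟪A w, A w⟫_ℝ) * t + 0 := by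
    intro t
    have h := hA.inner_nonneg_left (w - t • A w)
    simp only [map_sub, map_smul, inner_sub_left, inner_sub_right, real_inner_smul_left,
      real_inner_smul_right, hw, hsymm] at h
    linarith
  have hdisc := discrim_le_zero hquad
  rw [discrim] at hdisc
  have : ⟪A w, A w⟫_ℝ = 0 := by nlinarith [real_inner_self_nonneg (x := A w)]
  exact inner_self_eq_zero.1 this

lemma anorm_eq_zero_iff (hA : A.IsPositive) {x : H} : anorm A x = 0 ↔ A x = 0 := by
  refine ⟨fun h => hA.apply_eq_zero_of_inner_apply_self_eq_zero ?_, fun h => by simp [anorm, h]⟩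
  rw [← anorm_sq hA, h, sq, zero_mul]

lemma anorm_eq_of_apply_sub_eq_zero (hA : (A : H →ₗ[ℝ] H).IsSymmetric) {x y : H}
    (h : A (x - y) = 0) : anorm A x = anorm A y := by
  have hAx : A x = A y := sub_eq_zero.1 (by rwa [← map_sub])
  have hcross : ⟪A y, x⟫_ℝ = ⟪A y, y⟫_ℝ := by
    have := hA y (x - y)
    rw [ContinuousLinearMap.coe_coe, h, inner_zero_right, inner_sub_right, sub_eq_zero] at this
    exact this
  simp only [anorm, RCLike.re_to_real, hAx, hcross]

lemma IsABounded.anorm_apply_eq_of_apply_sub_eq_zero (hA : A.IsPositive) {T : H →L[ℝ] H}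
    (hT : IsABounded A T) {x y : H} (h : A (x - y) = 0) : anorm A (T x) = anorm A (T y) := by
  obtain ⟨c, -, hc⟩ := hT
  refine anorm_eq_of_apply_sub_eq_zero hA.isSymmetric
    ((anorm_eq_zero_iff hA).1 (le_antisymm ?_ ?_))
  · simpa [← map_sub, (anorm_eq_zero_iff hA).2 h] using hc (x - y)
  · exact Real.sqrt_nonneg _

lemma mem_orthogonal_closure_range_iff (hA : (A : H →ₗ[ℝ] H).IsSymmetric) {w : H} :
    w ∈ (LinearMap.range (A : H →ₗ[ℝ] H)).topologicalClosureᗮ ↔ A w = 0 := by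
  rw [Submodule.orthogonal_closure, hA.orthogonal_range, LinearMap.mem_ker,
    ContinuousLinearMap.coe_coe]

end

theorem stmt_6_general {H : Type*} [NormedAddCommGroup H] [InnerProductSpace ℝ H]
    (A C P : H →L[ℝ] H) (hA : A.IsPositive) (hC : IsABounded A C)
    (hPmem : ∀ x : H, P x ∈ (LinearMap.range (A : H →ₗ[ℝ] H)).topologicalClosure)
    (hPorth : ∀ x : H, x - P x ∈ ((LinearMap.range (A : H →ₗ[ℝ] H)).topologicalClosure)ᗮ) :
    opAnorm A C =
      sSup {r : ℝ | ∃ v ∈ (LinearMap.range (A : H →ₗ[ℝ] H)).topologicalClosure,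
        anorm A v = 1 ∧ r = anorm A (P (C v))} := by
  have hker : ∀ x, A (x - P x) = 0 := fun x =>
    (mem_orthogonal_closure_range_iff hA.isSymmetric).1 (hPorth x)
  have hP : ∀ x, anorm A (P x) = anorm A x := fun x =>
    (anorm_eq_of_apply_sub_eq_zero hA.isSymmetric (hker x)).symm
  have hCP : ∀ x, anorm A (C (P x)) = anorm A (C x) := fun x =>
    (hC.anorm_apply_eq_of_apply_sub_eq_zero hA (hker x)).symm
  rw [opAnorm]
  congr 1
  ext r
  constructor
  · rintro ⟨x, hx, rfl⟩
    exact ⟨P x, hPmem x, by rw [hP, hx], by rw [hP, hCP]⟩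
  · rintro ⟨v, -, hv, rfl⟩
    exact ⟨v, hv, by rw [hP]⟩

/-- if `P` is the orthogonal projection onto the closure of `R(A)` (characterized by
`P x ∈ closure R(A)` and `x − P x ⊥ closure R(A)`), and `C̃ = P∘C` restricted to the closure of
`R(A)`, then `‖C‖_A = ‖C̃‖_{A₀} = sup {‖P(Cv)‖_A : v ∈ closure R(A), ‖v‖_A = 1}`. -/
theorem stmt_6 {H : Type*} [NormedAddCommGroup H] [InnerProductSpace ℝ H] [CompleteSpace H]
    (A C P : H →L[ℝ] H) (hA : A.IsPositive) (hC : IsABounded A C)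
    (hPmem : ∀ x : H, P x ∈ (LinearMap.range (A : H →ₗ[ℝ] H)).topologicalClosure)
    (hPorth : ∀ x : H, x - P x ∈ ((LinearMap.range (A : H →ₗ[ℝ] H)).topologicalClosure)ᗮ) :
    opAnorm A C =
      sSup {r : ℝ | ∃ v ∈ (LinearMap.range (A : H →ₗ[ℝ] H)).topologicalClosure,
        anorm A v = 1 ∧ r = anorm A (P (C v))} :=
  stmt_6_general A C P hA hC hPmem hPorth
end

section
/- Let H be a complex Hilbert space, A a positive operator on H, and ε ∈ [0,1). Suppose B_{H(A)} ∩ closure(R(A)) is bounded with respect to the Hilbert space norm ‖·‖, where R(A) is the range of A. Let T, S be A-bounded compact operators on H and suppose M_A^T = {γx : γ ∈ ℂ, |γ| = 1} for some fixed x ∈ H. Then T ⊥_{ε(A)} S if and only if ‖Tx‖_A = ‖T‖_A and |Re(e^{−iθ}⟨Tx, Sx⟩_A)| ≤ ε‖T‖_A‖S‖_A for each θ ∈ [0,π). -/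
/-!
Writing `‖·‖_A = ‖√A ·‖`, one has
`‖(T + λS) x‖_A² = ‖T‖_A² + 2 Re (λ ⟨T x, S x⟩_A) + |λ|² ‖S x‖_A²`,
which gives `T ⊥_{ε(A)} S` as soon as `|⟨T x, S x⟩_A| ≤ ε ‖T‖_A ‖S‖_A`; the `θ`-condition is exactly
this bound.

Conversely, test the orthogonality at `λ = -t μ` (`|μ| = 1`, `t ↓ 0`) against approximate
maximizers `z_t` of `‖(T + λS) ·‖_A`. These may be taken in `closure (range A)`, where the unit
`A`-ball is norm bounded, and expanding the square gives
`Re (μ ⟨T z_t, S z_t⟩_A) ≤ ε ‖T‖_A ‖S‖_A + O(t)`. By compactness of `T`, `S` and weak compactness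
of bounded sets, a weak cluster point `w` of `z_t` satisfies `T z_t → T w`, `S z_t → S w` along a
subsequence, `‖w‖_A ≤ 1` and `‖T w‖_A = ‖T‖_A`; hence `w ∈ M_A^T = {γ x}` and
`⟨T z_t, S z_t⟩_A → ⟨T x, S x⟩_A`.
-/

open Filter
open scoped InnerProductSpace Topology

section Seminorm

variable {𝕜 H : Type*} [RCLike 𝕜] [NormedAddCommGroup H] [InnerProductSpace 𝕜 H]
  {A T : H →L[𝕜] H}

lemma anorm_nonneg (w : H) : 0 ≤ anorm A w := Real.sqrt_nonneg _

lemma IsABounded.bddAbove (hT : IsABounded A T) :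
    BddAbove {r : ℝ | ∃ z : H, anorm A z = 1 ∧ r = anorm A (T z)} := by
  obtain ⟨c, -, hc⟩ := hT
  refine ⟨c, fun r ⟨z, hz, hr⟩ => ?_⟩
  simpa [hr, hz] using hc z

lemma le_opAnorm (hT : IsABounded A T) {z : H} (hz : anorm A z = 1) :
    anorm A (T z) ≤ opAnorm A T :=
  le_csSup hT.bddAbove ⟨z, hz, rfl⟩

lemma opAnorm_nonneg (hT : IsABounded A T) {z : H} (hz : anorm A z = 1) :
    0 ≤ opAnorm A T :=
  (anorm_nonneg _).trans (le_opAnorm hT hz)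

lemma opAnorm_le {z₀ : H} (hz₀ : anorm A z₀ = 1) {c : ℝ}
    (hc : ∀ z : H, anorm A z = 1 → anorm A (T z) ≤ c) : opAnorm A T ≤ c :=
  csSup_le ⟨_, z₀, hz₀, rfl⟩ (by rintro _ ⟨z, hz, rfl⟩; exact hc z hz)

lemma exists_lt_anorm_apply {z₀ : H} (hz₀ : anorm A z₀ = 1) {r : ℝ} (hr : r < opAnorm A T) :
    ∃ z : H, anorm A z = 1 ∧ r < anorm A (T z) := by
  obtain ⟨_, ⟨z, hz, rfl⟩, hlt⟩ := exists_lt_of_lt_csSup (⟨_, z₀, hz₀, rfl⟩ :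
    {r : ℝ | ∃ z : H, anorm A z = 1 ∧ r = anorm A (T z)}.Nonempty) hr
  exact ⟨z, hz, hlt⟩

lemma ainner_smul_smul_of_norm_eq_one {γ : 𝕜} (hγ : ‖γ‖ = 1) (u v : H) :
    ainner A (γ • u) (γ • v) = ainner A u v := by
  simp only [ainner, map_smul, inner_smul_left, inner_smul_right, ← mul_assoc, RCLike.mul_conj,
    hγ, one_pow, RCLike.ofReal_one, one_mul]

end Seminorm

section WeakCompactness

variable {𝕜 E F : Type*} [RCLike 𝕜] [NormedAddCommGroup E] [InnerProductSpace 𝕜 E]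
  [NormedAddCommGroup F] [InnerProductSpace 𝕜 F]

lemma IsCompactOperator.exists_subseq_tendsto {T : E →L[𝕜] F} (hT : IsCompactOperator T)
    {z : ℕ → E} (hz : Bornology.IsBounded (Set.range z)) :
    ∃ u : F, ∃ φ : ℕ → ℕ, StrictMono φ ∧ Tendsto (fun n => T (z (φ n))) atTop (𝓝 u) := by
  have hK := IsCompactOperator.isCompact_closure_image_of_bounded
    (f := (T : E →ₗ[𝕜] F)) hT hz
  obtain ⟨u, -, φ, hφ, hu⟩ := hK.tendsto_subseq fun n => subset_closure ⟨z n, ⟨n, rfl⟩, rfl⟩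
  exact ⟨u, φ, hφ, hu⟩

variable [CompleteSpace E]

/-- Banach–Alaoglu, read through the Riesz representation `E ≃ E⋆`. -/
lemma exists_forall_mapClusterPt_inner {z : ℕ → E} (hz : Bornology.IsBounded (Set.range z)) :
    ∃ w : E, ∀ y : E, MapClusterPt ⟪w, y⟫_𝕜 atTop (fun n => ⟪z n, y⟫_𝕜) := by
  obtain ⟨M, hM⟩ := isBounded_iff_forall_norm_le.1 hz
  let f : ℕ → WeakDual 𝕜 E := fun n => InnerProductSpace.toDual 𝕜 E (z n)
  have hf : ∀ n, f n ∈ WeakDual.toStrongDual ⁻¹' Metric.closedBall 0 M := fun n => by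
    rw [Set.mem_preimage, mem_closedBall_zero_iff]
    exact ((InnerProductSpace.toDual 𝕜 E).norm_map (z n)).trans_le (hM _ ⟨n, rfl⟩)
  obtain ⟨g, -, hg⟩ := (WeakDual.isCompact_closedBall (𝕜 := 𝕜) 0 M).exists_clusterPt
    (tendsto_principal.2 (Eventually.of_forall hf) : map f atTop ≤ _)
  refine ⟨(InnerProductSpace.toDual 𝕜 E).symm (WeakDual.toStrongDual g), fun y => ?_⟩
  rw [InnerProductSpace.toDual_symm_apply]
  exact (mapClusterPt_def.2 hg).continuousAt_comp (WeakDual.eval_continuous y).continuousAt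

variable [CompleteSpace F]

lemma apply_eq_of_forall_mapClusterPt_inner (T : E →L[𝕜] F) {z : ℕ → E} {w : E} {u : F}
    (hw : ∀ y : E, MapClusterPt ⟪w, y⟫_𝕜 atTop (fun n => ⟪z n, y⟫_𝕜))
    (hTz : Tendsto (fun n => T (z n)) atTop (𝓝 u)) : T w = u := by
  refine ext_inner_right 𝕜 fun y => ?_
  have hcl := hw (ContinuousLinearMap.adjoint T y)
  simp only [ContinuousLinearMap.adjoint_inner_right] at hcl
  exact eq_of_nhds_neBot (hcl.clusterPt.mono (hTz.inner tendsto_const_nhds))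

end WeakCompactness

lemma re_exp_neg_mul_I_mul (w : ℂ) (θ : ℝ) :
    (Complex.exp (-(θ : ℂ) * Complex.I) * w).re = ‖w‖ * Real.cos (w.arg - θ) := by
  conv_lhs => rw [← Complex.norm_mul_exp_arg_mul_I w]
  rw [mul_left_comm, ← Complex.exp_add, ← add_mul, ← Complex.ofReal_neg, ← Complex.ofReal_add,
    Complex.re_ofReal_mul, Complex.exp_ofReal_mul_I_re, neg_add_eq_sub]

lemma norm_le_iff_forall_mem_Ico_abs_re_exp_mul_le (w : ℂ) (C : ℝ) :
    (∀ θ ∈ Set.Ico (0 : ℝ) Real.pi,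
      |(Complex.exp (-(θ : ℂ) * Complex.I) * w).re| ≤ C) ↔ ‖w‖ ≤ C := by
  simp only [re_exp_neg_mul_I_mul, abs_mul, abs_norm]
  refine ⟨fun h => ?_, fun h θ _ =>
    (mul_le_of_le_one_right (norm_nonneg w) (Real.abs_cos_le_one _)).trans h⟩
  rcases lt_or_ge w.arg 0 with hneg | hnonneg
  · simpa using h (w.arg + Real.pi) ⟨by linarith [Complex.neg_pi_lt_arg w], by linarith⟩
  rcases (Complex.arg_le_pi w).lt_or_eq with hlt | hpi
  · simpa using h w.arg ⟨hnonneg, hlt⟩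
  · simpa [hpi] using h 0 ⟨le_rfl, Real.pi_pos⟩

section Positive

variable {H : Type*} [NormedAddCommGroup H] [InnerProductSpace ℂ H] [CompleteSpace H]
  {A T S : H →L[ℂ] H} {x : H} {ε : ℝ}

lemma ainner_eq_inner_sqrt (hA : A.IsPositive) (w y : H) :
    ainner A w y = ⟪CFC.sqrt A w, CFC.sqrt A y⟫_ℂ := by
  have hsqrt : IsSelfAdjoint (CFC.sqrt A) := .of_nonneg (CFC.sqrt_nonneg A)
  have hsq : CFC.sqrt A * CFC.sqrt A = A :=
    CFC.sqrt_mul_sqrt_self A ((A.nonneg_iff_isPositive).2 hA)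
  conv_lhs => rw [ainner, ← hsq]
  exact hsqrt.isSymmetric _ _

lemma anorm_eq_norm_sqrt (hA : A.IsPositive) (w : H) : anorm A w = ‖CFC.sqrt A w‖ := by
  rw [anorm, ← ainner, ainner_eq_inner_sqrt hA, inner_self_eq_norm_sq]
  exact Real.sqrt_sq (norm_nonneg _)

lemma continuous_anorm (hA : A.IsPositive) : Continuous (anorm A) := by
  simpa only [funext (anorm_eq_norm_sqrt hA)] using (CFC.sqrt A).continuous.norm

lemma anorm_add_le (hA : A.IsPositive) (w y : H) : anorm A (w + y) ≤ anorm A w + anorm A y := by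
  simpa only [anorm_eq_norm_sqrt hA, map_add] using norm_add_le _ _

lemma anorm_smul (hA : A.IsPositive) (c : ℂ) (w : H) : anorm A (c • w) = ‖c‖ * anorm A w := by
  simp only [anorm_eq_norm_sqrt hA, map_smul, norm_smul]

lemma norm_ainner_le (hA : A.IsPositive) (w y : H) : ‖ainner A w y‖ ≤ anorm A w * anorm A y := by
  simpa only [ainner_eq_inner_sqrt hA, anorm_eq_norm_sqrt hA] using norm_inner_le_norm _ _

lemma anorm_add_smul_sq (hA : A.IsPositive) (u v : H) (c : ℂ) :
    anorm A (u + c • v) ^ 2 =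
      anorm A u ^ 2 + 2 * (c * ainner A u v).re + ‖c‖ ^ 2 * anorm A v ^ 2 := by
  simp only [anorm_eq_norm_sqrt hA, ainner_eq_inner_sqrt hA, map_add, map_smul,
    norm_add_sq (𝕜 := ℂ), inner_smul_right, norm_smul, mul_pow]
  rfl

lemma anorm_apply_le (hA : A.IsPositive) (hT : IsABounded A T) (z : H) :
    anorm A (T z) ≤ opAnorm A T * anorm A z := by
  rcases (anorm_nonneg (A := A) z).eq_or_lt with h0 | h0
  · obtain ⟨c, -, hc⟩ := hT
    simpa [← h0] using hc z
  · set a := anorm A z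
    have hz : anorm A ((a : ℂ)⁻¹ • z) = 1 := by
      rw [anorm_smul hA, norm_inv, Complex.norm_of_nonneg h0.le, inv_mul_cancel₀ h0.ne']
    calc anorm A (T z) = a * anorm A (T ((a : ℂ)⁻¹ • z)) := by
          rw [map_smul, anorm_smul hA, norm_inv, Complex.norm_of_nonneg h0.le,
            mul_inv_cancel_left₀ h0.ne']
      _ ≤ a * opAnorm A T := by gcongr; exact le_opAnorm hT hz
      _ = opAnorm A T * a := mul_comm _ _

lemma IsABounded.smul (hA : A.IsPositive) (hT : IsABounded A T) (l : ℂ) :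
    IsABounded A (l • T) := by
  obtain ⟨c, hc0, hc⟩ := hT
  refine ⟨(‖l‖ + 1) * c, by positivity, fun z => ?_⟩
  rw [smul_apply, anorm_smul hA, mul_assoc]
  exact mul_le_mul (by linarith) (hc z) (anorm_nonneg _) (by positivity)

lemma IsABounded.add (hA : A.IsPositive) (hT : IsABounded A T) (hS : IsABounded A S) :
    IsABounded A (T + S) := by
  obtain ⟨c, hc0, hc⟩ := hT
  obtain ⟨d, hd0, hd⟩ := hS
  refine ⟨c + d, by positivity, fun z => ?_⟩
  calc anorm A ((T + S) z) ≤ anorm A (T z) + anorm A (S z) := anorm_add_le hA _ _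
    _ ≤ c * anorm A z + d * anorm A z := add_le_add (hc z) (hd z)
    _ = (c + d) * anorm A z := by ring

lemma opAnorm_smul (hA : A.IsPositive) (hS : IsABounded A S) {z₀ : H} (hz₀ : anorm A z₀ = 1)
    (l : ℂ) : opAnorm A (l • S) = ‖l‖ * opAnorm A S := by
  refine le_antisymm (opAnorm_le hz₀ fun _ hz => ?_) ?_
  · rw [smul_apply, anorm_smul hA]
    exact mul_le_mul_of_nonneg_left (le_opAnorm hS hz) (norm_nonneg l)
  · rcases eq_or_ne l 0 with rfl | hl
    · simpa using opAnorm_nonneg (hS.smul hA 0) hz₀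
    rw [← le_div_iff₀' (norm_pos_iff.2 hl)]
    refine opAnorm_le hz₀ fun z hz => ?_
    rw [le_div_iff₀' (norm_pos_iff.2 hl), ← anorm_smul hA]
    exact le_opAnorm (hS.smul hA l) hz

lemma opAnorm_add_le (hA : A.IsPositive) (hT : IsABounded A T) (hS : IsABounded A S) {z₀ : H}
    (hz₀ : anorm A z₀ = 1) : opAnorm A (T + S) ≤ opAnorm A T + opAnorm A S :=
  opAnorm_le hz₀ fun _ hz =>
    (anorm_add_le hA _ _).trans (add_le_add (le_opAnorm hT hz) (le_opAnorm hS hz))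

lemma apply_eq_zero_of_mem_orthogonal_range (hA : A.IsPositive) {v : H}
    (hv : v ∈ ((LinearMap.range (A : H →ₗ[ℂ] H)).topologicalClosure)ᗮ) : A v = 0 := by
  have hmem : A (A v) ∈ (LinearMap.range (A : H →ₗ[ℂ] H)).topologicalClosure :=
    Submodule.le_topologicalClosure _ ⟨A v, rfl⟩
  have h : ⟪A (A v), v⟫_ℂ = 0 := (Submodule.mem_orthogonal _ v).1 hv _ hmem
  have hsymm : ⟪A (A v), v⟫_ℂ = ⟪A v, A v⟫_ℂ := hA.isSelfAdjoint.isSymmetric (A v) v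
  exact inner_self_eq_zero.1 (hsymm.symm.trans h)

lemma anorm_add_of_anorm_eq_zero (hA : A.IsPositive) {v : H} (hv : anorm A v = 0) (w : H) :
    anorm A (w + v) = anorm A w := by
  rw [anorm_eq_norm_sqrt hA, norm_eq_zero] at hv
  rw [anorm_eq_norm_sqrt hA, anorm_eq_norm_sqrt hA, map_add, hv, add_zero]

/-- The `A`-seminorm does not see the component in `ker A = (closure (range A))ᗮ`. -/
lemma exists_mem_closure_range (hA : A.IsPositive) (hT : IsABounded A T) (z : H) :
    ∃ z' ∈ (LinearMap.range (A : H →ₗ[ℂ] H)).topologicalClosure,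
      anorm A z' = anorm A z ∧ anorm A (T z') = anorm A (T z) := by
  set K := (LinearMap.range (A : H →ₗ[ℂ] H)).topologicalClosure
  have : CompleteSpace K := Submodule.isClosed_topologicalClosure _ |>.completeSpace_coe
  set v := z - K.starProjection z
  have hv : anorm A v = 0 := by
    have hAv : A v = 0 :=
      apply_eq_zero_of_mem_orthogonal_range hA (K.sub_starProjection_mem_orthogonal z)
    simp [anorm, hAv]
  have hTv : anorm A (T v) = 0 := by
    obtain ⟨c, -, hc⟩ := hT
    exact le_antisymm (by simpa [hv] using hc v) (anorm_nonneg _)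
  have hz : z = K.starProjection z + v := (add_sub_cancel _ _).symm
  refine ⟨K.starProjection z, K.starProjection_apply_mem z, ?_, ?_⟩
  · conv_rhs => rw [hz, anorm_add_of_anorm_eq_zero hA hv]
  · conv_rhs => rw [hz, map_add, anorm_add_of_anorm_eq_zero hA hTv]

lemma exists_mem_closure_range_lt_anorm_apply (hA : A.IsPositive) (hT : IsABounded A T) {z₀ : H}
    (hz₀ : anorm A z₀ = 1) {δ : ℝ} (hδ : 0 < δ) :
    ∃ z ∈ (LinearMap.range (A : H →ₗ[ℂ] H)).topologicalClosure,
      anorm A z = 1 ∧ opAnorm A T - δ < anorm A (T z) := by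
  obtain ⟨z, hz1, hz⟩ := exists_lt_anorm_apply hz₀ (sub_lt_self (opAnorm A T) hδ)
  obtain ⟨z', hz'K, hz'1, hz'T⟩ := exists_mem_closure_range hA hT z
  exact ⟨z', hz'K, hz'1.trans hz1, hz'T ▸ hz⟩

lemma anorm_le_one_of_forall_mapClusterPt_inner (hA : A.IsPositive) {z : ℕ → H} {w : H}
    (hw : ∀ y : H, MapClusterPt ⟪w, y⟫_ℂ atTop (fun n => ⟪z n, y⟫_ℂ))
    (hz : ∀ n, anorm A (z n) ≤ 1) : anorm A w ≤ 1 := by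
  have hbound : ‖⟪w, A w⟫_ℂ‖ ≤ anorm A w := by
    refine mem_closedBall_zero_iff.1 <| Metric.isClosed_closedBall.mem_of_mapClusterPt (hw (A w))
      (Eventually.of_forall fun n => mem_closedBall_zero_iff.2 ?_)
    rw [norm_inner_symm]
    calc ‖ainner A w (z n)‖ ≤ anorm A w * anorm A (z n) := norm_ainner_le hA _ _
      _ ≤ anorm A w := mul_le_of_le_one_right (anorm_nonneg w) (hz n)
  have hsq : anorm A w ^ 2 ≤ ‖⟪w, A w⟫_ℂ‖ := by
    rw [anorm, Real.sq_sqrt (hA.re_inner_nonneg_left w), norm_inner_symm]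
    exact RCLike.re_le_norm _
  nlinarith [anorm_nonneg (A := A) w]

lemma exists_subseq_tendsto_apply (hA : A.IsPositive) (hTc : IsCompactOperator T)
    (hSc : IsCompactOperator S) {z : ℕ → H} (hzb : Bornology.IsBounded (Set.range z))
    (hz : ∀ n, anorm A (z n) ≤ 1) :
    ∃ w : H, anorm A w ≤ 1 ∧ ∃ φ : ℕ → ℕ, StrictMono φ ∧
      Tendsto (fun n => T (z (φ n))) atTop (𝓝 (T w)) ∧
      Tendsto (fun n => S (z (φ n))) atTop (𝓝 (S w)) := by
  obtain ⟨u, φ, hφ, hu⟩ := IsCompactOperator.exists_subseq_tendsto hTc hzb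
  obtain ⟨v, ψ, hψ, hv⟩ := IsCompactOperator.exists_subseq_tendsto hSc
    (hzb.subset (Set.range_comp_subset_range φ z))
  have hu' : Tendsto (fun n => T (z (φ (ψ n)))) atTop (𝓝 u) := hu.comp hψ.tendsto_atTop
  obtain ⟨w, hw⟩ := exists_forall_mapClusterPt_inner (𝕜 := ℂ) (z := fun n => z (φ (ψ n)))
    (hzb.subset (Set.range_comp_subset_range _ z))
  refine ⟨w, anorm_le_one_of_forall_mapClusterPt_inner hA hw fun n => hz _, φ ∘ ψ,
    hφ.comp hψ, ?_, ?_⟩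
  · rwa [apply_eq_of_forall_mapClusterPt_inner T hw hu']
  · rwa [apply_eq_of_forall_mapClusterPt_inner S hw hv]

lemma exists_subseq_tendsto_ainner (hA : A.IsPositive) (hT : IsABounded A T)
    (hTc : IsCompactOperator T) (hSc : IsCompactOperator S) {x : H}
    (hM : {z : H | anorm A z = 1 ∧ anorm A (T z) = opAnorm A T} =
      {z : H | ∃ γ : ℂ, ‖γ‖ = 1 ∧ z = γ • x})
    (hTpos : 0 < opAnorm A T) {z : ℕ → H} (hzb : Bornology.IsBounded (Set.range z))
    (hz : ∀ n, anorm A (z n) = 1)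
    (hTz : Tendsto (fun n => anorm A (T (z n))) atTop (𝓝 (opAnorm A T))) :
    ∃ φ : ℕ → ℕ, StrictMono φ ∧
      Tendsto (fun n => ainner A (T (z (φ n))) (S (z (φ n)))) atTop
        (𝓝 (ainner A (T x) (S x))) := by
  obtain ⟨w, hw1, φ, hφ, hTw, hSw⟩ :=
    exists_subseq_tendsto_apply hA hTc hSc hzb fun n => (hz n).le
  have hTw_norm : anorm A (T w) = opAnorm A T :=
    tendsto_nhds_unique (((continuous_anorm hA).tendsto _).comp hTw) (hTz.comp hφ.tendsto_atTop)
  have hw : anorm A w = 1 := by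
    refine le_antisymm hw1 (le_of_mul_le_mul_left ?_ hTpos)
    simpa [hTw_norm] using anorm_apply_le hA hT w
  obtain ⟨γ, hγ, rfl⟩ : w ∈ {z : H | ∃ γ : ℂ, ‖γ‖ = 1 ∧ z = γ • x} := hM ▸ ⟨hw, hTw_norm⟩
  refine ⟨φ, hφ, ?_⟩
  rw [← ainner_smul_smul_of_norm_eq_one hγ, ← map_smul, ← map_smul]
  exact ((A.continuous.tendsto _).comp hTw).inner hSw

lemma opAnorm_sub_le_anorm_apply (hA : A.IsPositive) (hT : IsABounded A T) (hS : IsABounded A S)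
    (hx : anorm A x = 1) (l : ℂ) {z : H} (hz : anorm A z = 1) {δ : ℝ}
    (hmax : opAnorm A (T + l • S) - δ < anorm A ((T + l • S) z)) :
    opAnorm A T - 2 * ‖l‖ * opAnorm A S - δ ≤ anorm A (T z) := by
  have hR : IsABounded A (T + l • S) := hT.add hA (hS.smul hA l)
  have hT_le : opAnorm A T ≤ opAnorm A (T + l • S) + ‖l‖ * opAnorm A S := by
    have h := opAnorm_add_le hA hR (hS.smul hA (-l)) hx
    rwa [opAnorm_smul hA hS hx, norm_neg, add_assoc, ← add_smul, add_neg_cancel, zero_smul,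
      add_zero] at h
  have hRz : anorm A ((T + l • S) z) ≤ anorm A (T z) + ‖l‖ * opAnorm A S := by
    refine (anorm_add_le hA (T z) ((l • S) z)).trans (add_le_add le_rfl ?_)
    rw [smul_apply, anorm_smul hA]
    exact mul_le_mul_of_nonneg_left (le_opAnorm hS hz) (norm_nonneg l)
  linarith

lemma re_mul_ainner_le_of_near_max (hA : A.IsPositive) (hT : IsABounded A T)
    (hS : IsABounded A S) (hx : anorm A x = 1) {t : ℝ} (ht : 0 < t) {μ : ℂ} (hμ : ‖μ‖ = 1)
    (hOrth : opAnorm A T ^ 2 - 2 * ε * opAnorm A T * opAnorm A ((-(t * μ)) • S) ≤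
      opAnorm A (T + (-(t * μ)) • S) ^ 2)
    {z : H} (hz : anorm A z = 1)
    (hmax : opAnorm A (T + (-(t * μ)) • S) - t ^ 2 < anorm A ((T + (-(t * μ)) • S) z)) :
    (μ * ainner A (T z) (S z)).re ≤ ε * opAnorm A T * opAnorm A S +
      t * (opAnorm A S ^ 2 + 2 * opAnorm A T + 2 * t * opAnorm A S + t ^ 2) / 2 := by
  set l : ℂ := -(t * μ)
  set τ := opAnorm A T
  set σ := opAnorm A S
  set q := (μ * ainner A (T z) (S z)).re
  set a := anorm A ((T + l • S) z)
  have hl : ‖l‖ = t := by simp [l, hμ, ht.le]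
  have hR : IsABounded A (T + l • S) := hT.add hA (hS.smul hA l)
  have hTz := le_opAnorm hT hz
  have hSz := le_opAnorm hS hz
  have hTz0 := anorm_nonneg (A := A) (T z)
  have hSz0 := anorm_nonneg (A := A) (S z)
  have hexp : a ^ 2 = anorm A (T z) ^ 2 - 2 * t * q + t ^ 2 * anorm A (S z) ^ 2 := by
    have hre : (l * ainner A (T z) (S z)).re = -(t * q) := by
      simp only [l, q, neg_mul, Complex.neg_re, mul_assoc, Complex.re_ofReal_mul]
    rw [show a = anorm A (T z + l • S z) from rfl, anorm_add_smul_sq hA, hre, hl]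
    ring
  have ha : a ≤ τ + t * σ := by
    refine (anorm_add_le hA (T z) ((l • S) z)).trans (add_le_add hTz ?_)
    rw [smul_apply, anorm_smul hA, hl]
    exact mul_le_mul_of_nonneg_left hSz ht.le
  have hN : opAnorm A (T + l • S) ^ 2 ≤ (a + t ^ 2) ^ 2 :=
    pow_le_pow_left₀ (opAnorm_nonneg hR hx) (by linarith) 2
  have hTz2 : anorm A (T z) ^ 2 ≤ τ ^ 2 := pow_le_pow_left₀ hTz0 hTz 2
  have hSz2 : t ^ 2 * anorm A (S z) ^ 2 ≤ t ^ 2 * σ ^ 2 :=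
    mul_le_mul_of_nonneg_left (pow_le_pow_left₀ hSz0 hSz 2) (by positivity)
  have hat : a * t ^ 2 ≤ (τ + t * σ) * t ^ 2 := mul_le_mul_of_nonneg_right ha (by positivity)
  rw [opAnorm_smul hA hS hx, hl] at hOrth
  refine le_of_mul_le_mul_left ?_ (by positivity : 0 < 2 * t)
  linarith

lemma re_mul_ainner_le_of_opOrthEps (hA : A.IsPositive)
    (hball : Bornology.IsBounded ({x : H | anorm A x ≤ 1} ∩
      ((LinearMap.range (A : H →ₗ[ℂ] H)).topologicalClosure : Set H)))
    (hT : IsABounded A T) (hS : IsABounded A S)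
    (hTc : IsCompactOperator T) (hSc : IsCompactOperator S)
    (hM : {z : H | anorm A z = 1 ∧ anorm A (T z) = opAnorm A T} =
      {z : H | ∃ γ : ℂ, ‖γ‖ = 1 ∧ z = γ • x})
    (hx : anorm A x = 1) (hTpos : 0 < opAnorm A T) (hOrth : OpOrthEps A T S ε)
    {μ : ℂ} (hμ : ‖μ‖ = 1) :
    (μ * ainner A (T x) (S x)).re ≤ ε * opAnorm A T * opAnorm A S := by
  set τ := opAnorm A T
  set σ := opAnorm A S
  set t : ℕ → ℝ := fun n => 1 / (n + 1)
  have ht : ∀ n, 0 < t n := fun n => Nat.one_div_pos_of_nat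
  have ht0 : Tendsto t atTop (𝓝 0) := tendsto_one_div_add_atTop_nhds_zero_nat
  choose z hzK hz1 hzmax using fun n =>
    exists_mem_closure_range_lt_anorm_apply hA (hT.add hA (hS.smul hA (-(t n * μ)))) hx
      (pow_pos (ht n) 2)
  have hzb : Bornology.IsBounded (Set.range z) :=
    hball.subset (Set.range_subset_iff.2 fun n => ⟨(hz1 n).le, hzK n⟩)
  have hTz : Tendsto (fun n => anorm A (T (z n))) atTop (𝓝 τ) := by
    have hlow : Tendsto (fun n => τ - 2 * t n * σ - t n ^ 2) atTop (𝓝 τ) := by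
      simpa using (tendsto_const_nhds.sub ((ht0.const_mul 2).mul_const σ)).sub (ht0.pow 2)
    refine tendsto_of_tendsto_of_tendsto_of_le_of_le hlow tendsto_const_nhds (fun n => ?_)
      fun n => le_opAnorm hT (hz1 n)
    have hl : ‖-((t n : ℂ) * μ)‖ = t n := by simp [hμ, (ht n).le]
    simpa [hl] using opAnorm_sub_le_anorm_apply hA hT hS hx _ (hz1 n) (hzmax n)
  obtain ⟨φ, hφ, hlim⟩ := exists_subseq_tendsto_ainner (S := S) hA hT hTc hSc hM hTpos hzb hz1 hTz
  have herr : Tendsto (fun n => ε * τ * σ + t (φ n) * (σ ^ 2 + 2 * τ + 2 * t (φ n) * σ +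
      t (φ n) ^ 2) / 2) atTop (𝓝 (ε * τ * σ)) := by
    have hcont : Continuous fun s : ℝ => ε * τ * σ + s * (σ ^ 2 + 2 * τ + 2 * s * σ + s ^ 2) / 2 :=
      by fun_prop
    simpa [Function.comp_def] using (hcont.tendsto 0).comp (ht0.comp hφ.tendsto_atTop)
  refine le_of_tendsto_of_tendsto' ((Complex.continuous_re.tendsto _).comp (hlim.const_mul μ))
    herr fun n => ?_
  exact re_mul_ainner_le_of_near_max hA hT hS hx (ht _) hμ (hOrth _) (hz1 _) (hzmax _)

lemma norm_ainner_le_of_opOrthEps (hA : A.IsPositive)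
    (hball : Bornology.IsBounded ({x : H | anorm A x ≤ 1} ∩
      ((LinearMap.range (A : H →ₗ[ℂ] H)).topologicalClosure : Set H)))
    (hT : IsABounded A T) (hS : IsABounded A S)
    (hTc : IsCompactOperator T) (hSc : IsCompactOperator S)
    (hM : {z : H | anorm A z = 1 ∧ anorm A (T z) = opAnorm A T} =
      {z : H | ∃ γ : ℂ, ‖γ‖ = 1 ∧ z = γ • x})
    (hx : anorm A x = 1) (hxT : anorm A (T x) = opAnorm A T) (hOrth : OpOrthEps A T S ε) :
    ‖ainner A (T x) (S x)‖ ≤ ε * opAnorm A T * opAnorm A S := by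
  set w := ainner A (T x) (S x)
  rcases (opAnorm_nonneg hT hx).eq_or_lt with hT0 | hTpos
  · calc ‖w‖ ≤ anorm A (T x) * anorm A (S x) := norm_ainner_le hA _ _
      _ = ε * opAnorm A T * opAnorm A S := by rw [hxT, ← hT0]; ring
  have hμ : ‖Complex.exp (-(w.arg : ℂ) * Complex.I)‖ = 1 := by
    rw [← Complex.ofReal_neg, Complex.norm_exp_ofReal_mul_I]
  have h := re_mul_ainner_le_of_opOrthEps hA hball hT hS hTc hSc hM hx hTpos hOrth hμ
  rwa [re_exp_neg_mul_I_mul, sub_self, Real.cos_zero, mul_one] at h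

lemma opOrthEps_of_norm_ainner_le (hA : A.IsPositive) (hT : IsABounded A T)
    (hS : IsABounded A S) (hx : anorm A x = 1) (hxT : anorm A (T x) = opAnorm A T)
    (h : ‖ainner A (T x) (S x)‖ ≤ ε * opAnorm A T * opAnorm A S) : OpOrthEps A T S ε := by
  intro l
  have hle : anorm A (T x + l • S x) ^ 2 ≤ opAnorm A (T + l • S) ^ 2 :=
    pow_le_pow_left₀ (anorm_nonneg _) (le_opAnorm (hT.add hA (hS.smul hA l)) hx) 2
  have hre : -(‖l‖ * ‖ainner A (T x) (S x)‖) ≤ (l * ainner A (T x) (S x)).re := by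
    rw [← norm_mul]
    exact neg_le_of_abs_le (Complex.abs_re_le_norm _)
  have hl := mul_le_mul_of_nonneg_left h (norm_nonneg l)
  rw [anorm_add_smul_sq hA, hxT] at hle
  rw [opAnorm_smul hA hS hx]
  nlinarith [sq_nonneg ‖l‖, sq_nonneg (anorm A (S x))]

end Positive

theorem stmt_10_general {H : Type*} [NormedAddCommGroup H] [InnerProductSpace ℂ H] [CompleteSpace H]
    (A : H →L[ℂ] H) (hA : A.IsPositive) (ε : ℝ)
    (hball : Bornology.IsBounded ({x : H | anorm A x ≤ 1} ∩
      ((LinearMap.range (A : H →ₗ[ℂ] H)).topologicalClosure : Set H)))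
    (T S : H →L[ℂ] H) (hT : IsABounded A T) (hS : IsABounded A S)
    (hTc : IsCompactOperator (⇑T)) (hSc : IsCompactOperator (⇑S))
    (x : H)
    (hM : {z : H | anorm A z = 1 ∧ anorm A (T z) = opAnorm A T} =
      {z : H | ∃ γ : ℂ, ‖γ‖ = 1 ∧ z = γ • x}) :
    OpOrthEps A T S ε ↔
      anorm A (T x) = opAnorm A T ∧
        ∀ θ ∈ Set.Ico (0 : ℝ) Real.pi,
          |(Complex.exp (-(θ : ℂ) * Complex.I) * ainner A (T x) (S x)).re| ≤
            ε * opAnorm A T * opAnorm A S := by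
  obtain ⟨hx, hxT⟩ : x ∈ {z : H | anorm A z = 1 ∧ anorm A (T z) = opAnorm A T} := by
    rw [hM]
    exact ⟨1, norm_one, (one_smul ℂ x).symm⟩
  rw [norm_le_iff_forall_mem_Ico_abs_re_exp_mul_le]
  exact ⟨fun hOrth => ⟨hxT, norm_ainner_le_of_opOrthEps hA hball hT hS hTc hSc hM hx hxT hOrth⟩,
    fun ⟨_, h⟩ => opOrthEps_of_norm_ainner_le hA hT hS hx hxT h⟩

/-- if `M_A^T = {γx : |γ| = 1}` for a fixed `x`, then `T ⊥_{ε(A)} S` iff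
`‖Tx‖_A = ‖T‖_A` and `|Re(e^{−iθ}⟨Tx, Sx⟩_A)| ≤ ε‖T‖_A‖S‖_A` for each `θ ∈ [0,π)`. -/
theorem stmt_10 {H : Type*} [NormedAddCommGroup H] [InnerProductSpace ℂ H] [CompleteSpace H]
    (A : H →L[ℂ] H) (hA : A.IsPositive) (ε : ℝ) (hε0 : 0 ≤ ε) (hε1 : ε < 1)
    (hball : Bornology.IsBounded ({x : H | anorm A x ≤ 1} ∩
      ((LinearMap.range (A : H →ₗ[ℂ] H)).topologicalClosure : Set H)))
    (T S : H →L[ℂ] H) (hT : IsABounded A T) (hS : IsABounded A S)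
    (hTc : IsCompactOperator (⇑T)) (hSc : IsCompactOperator (⇑S))
    (x : H)
    (hM : {z : H | anorm A z = 1 ∧ anorm A (T z) = opAnorm A T} =
      {z : H | ∃ γ : ℂ, ‖γ‖ = 1 ∧ z = γ • x}) :
    OpOrthEps A T S ε ↔
      anorm A (T x) = opAnorm A T ∧
        ∀ θ ∈ Set.Ico (0 : ℝ) Real.pi,
          |(Complex.exp (-(θ : ℂ) * Complex.I) * ainner A (T x) (S x)).re| ≤
            ε * opAnorm A T * opAnorm A S :=
  stmt_10_general A hA ε hball T S hT hS hTc hSc x hM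
end
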